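/- arXiv:1605.02839 — 7 statements merged into one kernel-verified Lean document; each statement's English description precedes it below -/
import Mathlib

section
/- Suppose 2^n = ∑_{i=1}^m d_i · 10^{e_i} with 1 ≤ d_i ≤ 9 and 0 ≤ e_1 < e_2 < ... < e_m, where n is a positive integer. Then for every k with 2 ≤ k ≤ m, 2^{e_k} ≤ ∑_{i=1}^{k-1} d_i · 10^{e_i}. -/
/-!
Split `2 ^ n = S + T`, where `S` collects the digits below position `e k` and `T` those from
position `e k` on. Every term of `T` is a multiple of `10 ^ e k`, so `2 ^ e k ∣ T`, and
`2 ^ e k ≤ 10 ^ e k ≤ T ≤ 2 ^ n`, so also `2 ^ e k ∣ 2 ^ n`. Hence `2 ^ e k` divides `S > 0`.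
-/

open Finset

theorem sum_Icc_one_pred_add_sum_Icc {M : Type*} [AddCommMonoid M] (f : ℕ → M) {k m : ℕ}
    (hk : 1 ≤ k) (hkm : k ≤ m + 1) :
    ∑ i ∈ Icc 1 (k - 1), f i + ∑ i ∈ Icc k m, f i = ∑ i ∈ Icc 1 m, f i := by
  obtain ⟨j, rfl⟩ : ∃ j, k = j + 1 := ⟨k - 1, by omega⟩
  simp only [Nat.add_sub_cancel, ← Ico_add_one_right_eq_Icc]
  exact sum_Ico_consecutive f hk hkm

theorem pow_dvd_sum_mul_pow {ι : Type*} (s : Finset ι) (d e : ι → ℕ) {b a : ℕ}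
    (h : ∀ i ∈ s, a ≤ e i) : b ^ a ∣ ∑ i ∈ s, d i * b ^ e i :=
  dvd_sum fun i hi => (pow_dvd_pow b (h i hi)).mul_left (d i)

theorem pow_le_of_add_eq_pow {p a n s t : ℕ} (hp : 1 < p) (hs : 0 < s) (hdvd : p ^ a ∣ t)
    (hle : p ^ a ≤ t) (h : s + t = p ^ n) : p ^ a ≤ s := by
  have han : a ≤ n := (Nat.pow_le_pow_iff_right hp).mp (by omega)
  have hdvd_sum : p ^ a ∣ s + t := h ▸ pow_dvd_pow p han
  exact Nat.le_of_dvd hs ((Nat.dvd_add_left hdvd).mp hdvd_sum)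

theorem stmt6_general (n m : ℕ) (d e : ℕ → ℕ)
    (hd : ∀ i, 1 ≤ i → i ≤ m → 1 ≤ d i ∧ d i ≤ 9)
    (he : ∀ i j, 1 ≤ i → i < j → j ≤ m → e i < e j)
    (heq : 2 ^ n = ∑ i ∈ Finset.Icc 1 m, d i * 10 ^ (e i)) :
    ∀ k, 2 ≤ k → k ≤ m → 2 ^ (e k) ≤ ∑ i ∈ Finset.Icc 1 (k - 1), d i * 10 ^ (e i) := by
  intro k hk2 hkm
  have term_le_sum {s : Finset ℕ} {i : ℕ} (hi : i ∈ s) :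
      d i * 10 ^ e i ≤ ∑ j ∈ s, d j * 10 ^ e j :=
    single_le_sum (f := fun j => d j * 10 ^ e j) (fun _ _ => Nat.zero_le _) hi
  refine pow_le_of_add_eq_pow one_lt_two ?pos ?dvd ?le
    ((sum_Icc_one_pred_add_sum_Icc _ (by omega) (by omega)).trans heq.symm)
  case pos =>
    have hd1 := (hd 1 le_rfl (by omega)).1
    exact lt_of_lt_of_le (by positivity) (term_le_sum (mem_Icc.mpr ⟨le_rfl, by omega⟩))
  case dvd =>
    refine (pow_dvd_pow_of_dvd (by norm_num : 2 ∣ 10) _).trans (pow_dvd_sum_mul_pow _ _ _ ?_)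
    intro i hi
    obtain ⟨hki, him⟩ := mem_Icc.mp hi
    rcases hki.eq_or_lt with rfl | hlt
    · exact le_rfl
    · exact (he k i (by omega) hlt him).le
  case le =>
    calc 2 ^ e k ≤ 10 ^ e k := Nat.pow_le_pow_left (by norm_num) _
      _ ≤ d k * 10 ^ e k := Nat.le_mul_of_pos_left _ (hd k (by omega) hkm).1
      _ ≤ _ := term_le_sum (mem_Icc.mpr ⟨le_rfl, hkm⟩)

theorem stmt6 (n m : ℕ) (d e : ℕ → ℕ) (hn : 0 < n)
    (hd : ∀ i, 1 ≤ i → i ≤ m → 1 ≤ d i ∧ d i ≤ 9)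
    (he : ∀ i j, 1 ≤ i → i < j → j ≤ m → e i < e j)
    (heq : 2 ^ n = ∑ i ∈ Finset.Icc 1 m, d i * 10 ^ (e i)) :
    ∀ k, 2 ≤ k → k ≤ m → 2 ^ (e k) ≤ ∑ i ∈ Finset.Icc 1 (k - 1), d i * 10 ^ (e i) :=
  stmt6_general n m d e hd he heq
end

section
/- Suppose 2^n = ∑_{i=1}^m d_i · 10^{e_i} with 1 ≤ d_i ≤ 9 and 0 ≤ e_1 < e_2 < ... < e_m, where n is a positive integer. Then e_k < 4^{k-1} for all 1 ≤ k ≤ m. -/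
/-!
Write `S k = ∑_{i ≤ k} d i * 10 ^ e i`. Since the digits are at most 9 and the exponents
increase, `0 < S k < 10 ^ (e k + 1)`. The remaining terms of the expansion are all divisible by
`10 ^ e (k + 1)`, so `2 ^ e (k + 1)` divides both `2 ^ n` and `2 ^ n - S k`, hence `S k`. Thus
`2 ^ e (k + 1) ≤ S k < 10 ^ (e k + 1) < 2 ^ (4 * (e k + 1))`, i.e. `e (k + 1) < 4 * (e k + 1)`,
and induction from `e 1 = 0` (as `5 ∤ 2 ^ n`) gives `e k < 4 ^ (k - 1)`.
-/

open Finset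

theorem Finset.sum_Icc_one_add_sum_Icc_succ {M : Type*} [AddCommMonoid M] (f : ℕ → M)
    {k m : ℕ} (hkm : k ≤ m) :
    ∑ i ∈ Icc 1 k, f i + ∑ i ∈ Icc (k + 1) m, f i = ∑ i ∈ Icc 1 m, f i := by
  simp only [Icc_add_one_left_eq_Ioc, show ∀ j : ℕ, Icc 1 j = Ioc 0 j from fun _ => rfl]
  exact sum_Ioc_consecutive f (Nat.zero_le k) hkm

theorem eq_zero_of_ten_pow_dvd_two_pow {a n : ℕ} (h : 10 ^ a ∣ 2 ^ n) : a = 0 := by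
  have h5 : 5 ^ a ∣ 2 ^ n := (pow_dvd_pow_of_dvd (by norm_num) a).trans h
  have hcop : Nat.Coprime (5 ^ a) (2 ^ n) := Nat.Coprime.pow _ _ (by norm_num)
  simpa using Nat.pow_eq_one.mp (hcop.eq_one_of_dvd h5)

section DigitExpansion

variable {b n m : ℕ} {d e : ℕ → ℕ}

theorem pow_dvd_sum_Icc_mul_pow {j : ℕ} (he : ∀ i ∈ Icc j m, e j ≤ e i) :
    b ^ e j ∣ ∑ i ∈ Icc j m, d i * b ^ e i :=
  dvd_sum fun i hi => (pow_dvd_pow b (he i hi)).mul_left (d i)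

theorem sum_Icc_mul_pow_lt_pow_succ (hd : ∀ i ∈ Icc 1 m, d i < b)
    (he : StrictMonoOn e (Set.Icc 1 m)) {k : ℕ} (hk : 1 ≤ k) (hkm : k ≤ m) :
    ∑ i ∈ Icc 1 k, d i * b ^ e i < b ^ (e k + 1) := by
  obtain ⟨c, rfl⟩ : ∃ c, b = c + 1 := ⟨b - 1, by have := hd 1 (by simp; omega); omega⟩
  induction k, hk using Nat.le_induction with
  | base =>
    rw [Icc_self, sum_singleton, pow_succ, mul_comm _ (c + 1)]
    exact Nat.mul_lt_mul_of_pos_right (hd 1 (by simp; omega)) (by positivity)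
  | succ k hk ih =>
    have hlt : e k < e (k + 1) := he ⟨hk, by omega⟩ ⟨by omega, hkm⟩ (Nat.lt_succ_self k)
    have hpow : (c + 1) ^ (e k + 1) ≤ (c + 1) ^ e (k + 1) := Nat.pow_le_pow_right (by omega) hlt
    have hdigit : d (k + 1) * (c + 1) ^ e (k + 1) ≤ c * (c + 1) ^ e (k + 1) :=
      Nat.mul_le_mul_right _ (Nat.le_of_lt_succ (hd (k + 1) (by simp; omega)))
    calc ∑ i ∈ Icc 1 (k + 1), d i * (c + 1) ^ e i
        = ∑ i ∈ Icc 1 k, d i * (c + 1) ^ e i + d (k + 1) * (c + 1) ^ e (k + 1) :=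
          sum_Icc_succ_top (by omega) _
      _ < (c + 1) ^ e (k + 1) + c * (c + 1) ^ e (k + 1) := by have := ih (by omega); omega
      _ = (c + 1) ^ (e (k + 1) + 1) := by ring

theorem lt_four_mul_succ_of_two_pow_eq (hd0 : ∀ i ∈ Icc 1 m, 0 < d i)
    (hd : ∀ i ∈ Icc 1 m, d i < 10) (he : StrictMonoOn e (Set.Icc 1 m))
    (heq : 2 ^ n = ∑ i ∈ Icc 1 m, d i * 10 ^ e i) {k : ℕ} (hk : 1 ≤ k) (hkm : k + 1 ≤ m) :
    e (k + 1) < 4 * (e k + 1) := by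
  set S := ∑ i ∈ Icc 1 k, d i * 10 ^ e i
  set T := ∑ i ∈ Icc (k + 1) m, d i * 10 ^ e i
  have hsplit : 2 ^ n = S + T := by rw [heq, sum_Icc_one_add_sum_Icc_succ _ (by omega)]
  have hterm : ∀ i ∈ Icc 1 m, 0 < d i * 10 ^ e i := fun i hi =>
    Nat.mul_pos (hd0 i hi) (by positivity)
  have hS : 0 < S := sum_pos (fun i hi => hterm i (by simp at hi ⊢; omega)) (nonempty_Icc.mpr hk)
  have hT : 0 < T := sum_pos (fun i hi => hterm i (by simp at hi ⊢; omega)) (nonempty_Icc.mpr hkm)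
  have hTdvd : 10 ^ e (k + 1) ∣ T := pow_dvd_sum_Icc_mul_pow fun i hi => by
    simp only [mem_Icc] at hi
    exact he.monotoneOn ⟨by omega, hkm⟩ ⟨by omega, hi.2⟩ hi.1
  have hTdvd2 : 2 ^ e (k + 1) ∣ T := (pow_dvd_pow_of_dvd (by norm_num) _).trans hTdvd
  have hle : e (k + 1) ≤ n := by
    have : 2 ^ e (k + 1) ≤ 2 ^ n := by
      calc 2 ^ e (k + 1) ≤ T := Nat.le_of_dvd hT hTdvd2
        _ ≤ 2 ^ n := by omega
    exact (Nat.pow_le_pow_iff_right (by norm_num)).mp this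
  have hSdvd : 2 ^ e (k + 1) ∣ S :=
    (Nat.dvd_add_left hTdvd2).mp (hsplit ▸ pow_dvd_pow 2 hle)
  have : 2 ^ e (k + 1) < 2 ^ (4 * (e k + 1)) :=
    calc 2 ^ e (k + 1) ≤ S := Nat.le_of_dvd hS hSdvd
      _ < 10 ^ (e k + 1) := sum_Icc_mul_pow_lt_pow_succ hd he hk (by omega)
      _ < 16 ^ (e k + 1) := Nat.pow_lt_pow_left (by norm_num) (by omega)
      _ = 2 ^ (4 * (e k + 1)) := by rw [pow_mul]; norm_num
  exact (Nat.pow_lt_pow_iff_right (by norm_num)).mp this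

end DigitExpansion

theorem stmt9_general (n m : ℕ) (d e : ℕ → ℕ)
    (hd : ∀ i, 1 ≤ i → i ≤ m → 1 ≤ d i ∧ d i ≤ 9)
    (he : ∀ i j, 1 ≤ i → i < j → j ≤ m → e i < e j)
    (heq : 2 ^ n = ∑ i ∈ Finset.Icc 1 m, d i * 10 ^ (e i)) :
    ∀ k, 1 ≤ k → k ≤ m → e k < 4 ^ (k - 1) := by
  have hd0 : ∀ i ∈ Icc 1 m, 0 < d i := fun i hi => (hd i (mem_Icc.mp hi).1 (mem_Icc.mp hi).2).1
  have hd10 : ∀ i ∈ Icc 1 m, d i < 10 := fun i hi =>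
    Nat.lt_succ_of_le (hd i (mem_Icc.mp hi).1 (mem_Icc.mp hi).2).2
  have hmono : StrictMonoOn e (Set.Icc 1 m) := fun i hi j hj hij => he i j hi.1 hij hj.2
  intro k hk hkm
  induction k, hk using Nat.le_induction with
  | base =>
    have : e 1 = 0 := eq_zero_of_ten_pow_dvd_two_pow <| heq ▸ pow_dvd_sum_Icc_mul_pow fun i hi =>
      hmono.monotoneOn ⟨le_rfl, by omega⟩ (mem_Icc.mp hi) (mem_Icc.mp hi).1
    omega
  | succ k hk ih =>
    have hstep := lt_four_mul_succ_of_two_pow_eq hd0 hd10 hmono heq hk hkm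
    obtain ⟨j, rfl⟩ : ∃ j, k = j + 1 := ⟨k - 1, by omega⟩
    have := ih (by omega)
    simp only [Nat.add_sub_cancel, pow_succ] at this ⊢
    omega

theorem stmt9 (n m : ℕ) (d e : ℕ → ℕ) (hn : 0 < n)
    (hd : ∀ i, 1 ≤ i → i ≤ m → 1 ≤ d i ∧ d i ≤ 9)
    (he : ∀ i j, 1 ≤ i → i < j → j ≤ m → e i < e j)
    (heq : 2 ^ n = ∑ i ∈ Finset.Icc 1 m, d i * 10 ^ (e i)) :
    ∀ k, 1 ≤ k → k ≤ m → e k < 4 ^ (k - 1) :=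
  stmt9_general n m d e hd he heq
end

section
/- If 2^n has exactly m nonzero decimal digits, where n is a positive integer, then 2^n < 10^(4^(m-1)). -/
/-!
Read the decimal digits of `N = 2 ^ n` from the least significant end. For `0 < e` with
`10 ^ e ≤ N` the truncation `N % 10 ^ e` is a multiple of `2 ^ e`, and it is nonzero because
`5 ∤ N`, so it is at least `2 ^ e`. Hence if the digit at position `e` is nonzero and `c` nonzero
digits lie below it, induction gives `2 ^ e ≤ N % 10 ^ e < 10 ^ 4 ^ (c - 1) < 2 ^ 4 ^ c`, so
`e < 4 ^ c` and `N % 10 ^ (e + 1) < 10 ^ (e + 1) ≤ 10 ^ 4 ^ c`.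
-/

namespace Nat

lemma ofDigits_eq_zero_of_forall_eq_zero {b : ℕ} {l : List ℕ} (h : ∀ x ∈ l, x = 0) :
    ofDigits b l = 0 := by
  rw [List.eq_replicate_iff.mpr ⟨rfl, h⟩, ofDigits_replicate_zero]

lemma lt_four_pow_of_two_pow_lt_ten_pow {e c : ℕ} (h : 2 ^ e < 10 ^ 4 ^ c) : e < 4 ^ (c + 1) := by
  have h16 : 10 ^ 4 ^ c ≤ 2 ^ 4 ^ (c + 1) :=
    calc 10 ^ 4 ^ c ≤ (2 ^ 4) ^ 4 ^ c := Nat.pow_le_pow_left (by norm_num) _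
      _ = 2 ^ 4 ^ (c + 1) := by rw [← pow_mul, pow_succ']
  exact (Nat.pow_lt_pow_iff_right (by norm_num)).mp (h.trans_le h16)

lemma two_pow_le_mod_ten_pow {N e : ℕ} (he : 0 < e) (h2 : 2 ^ e ∣ N) (h5 : ¬ 5 ∣ N) :
    2 ^ e ≤ N % 10 ^ e := by
  have hdvd : 2 ^ e ∣ N % 10 ^ e :=
    (Nat.dvd_mod_iff (pow_dvd_pow_of_dvd (by norm_num) e)).mpr h2
  have hpos : N % 10 ^ e ≠ 0 := fun h0 =>
    h5 ((dvd_pow (by norm_num : 5 ∣ 10) he.ne').trans (Nat.dvd_of_mod_eq_zero h0))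
  exact Nat.le_of_dvd (Nat.pos_of_ne_zero hpos) hdvd

theorem ofDigits_lt_ten_pow_four_pow {l : List ℕ} (hl : ∀ x ∈ l, x < 10)
    (hpre : ∀ e, 0 < e → e < l.length → 2 ^ e ≤ ofDigits 10 (l.take e)) :
    ofDigits 10 l < 10 ^ 4 ^ ((l.filter (· ≠ 0)).length - 1) := by
  induction l using List.reverseRecOn with
  | nil => simp
  | append_singleton l d ih =>
    have hl' : ∀ x ∈ l, x < 10 := fun x hx => hl x (List.mem_append_left _ hx)
    have hpre' : ∀ e, 0 < e → e < l.length → 2 ^ e ≤ ofDigits 10 (l.take e) := by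
      intro e he0 he
      simpa [List.take_append_of_le_length he.le] using
        hpre e he0 (by simp only [List.length_append]; omega)
    specialize ih hl' hpre'
    by_cases hd : d = 0
    · subst hd
      simpa using ih
    set c := (l.filter (· ≠ 0)).length
    have hcount : ((l ++ [d]).filter (· ≠ 0)).length = c + 1 := by
      simp [List.filter_append, hd, c]
    have hlen : l.length + 1 ≤ 4 ^ c := by
      rcases Nat.eq_zero_or_pos l.length with h0 | hpos
      · simpa [h0] using Nat.one_le_pow c 4 (by norm_num)
      have hle : 2 ^ l.length ≤ ofDigits 10 l := by
        simpa using hpre l.length hpos (by simp)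
      have hc : c ≠ 0 := by
        intro hc0
        have : ofDigits 10 l = 0 := ofDigits_eq_zero_of_forall_eq_zero (by simpa [c] using hc0)
        have := Nat.one_le_two_pow (n := l.length)
        omega
      have := lt_four_pow_of_two_pow_lt_ten_pow (hle.trans_lt ih)
      rwa [Nat.sub_add_cancel (Nat.one_le_iff_ne_zero.mpr hc)] at this
    rw [hcount, Nat.add_sub_cancel]
    calc ofDigits 10 (l ++ [d]) < 10 ^ (l ++ [d]).length :=
          ofDigits_lt_base_pow_length (by norm_num) hl
      _ ≤ 10 ^ 4 ^ c := Nat.pow_le_pow_right (by norm_num) (by simpa using hlen)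

lemma two_pow_le_ofDigits_take_digits_two_pow {n e : ℕ} (he0 : 0 < e)
    (he : e < (digits 10 (2 ^ n)).length) : 2 ^ e ≤ ofDigits 10 ((digits 10 (2 ^ n)).take e) := by
  have hen : e ≤ n := by
    have h10 := (lt_digits_length_iff (by norm_num) _).mp he
    have h2 : 2 ^ e ≤ 10 ^ e := Nat.pow_le_pow_left (by norm_num) e
    exact (Nat.pow_le_pow_iff_right (by norm_num)).mp (h2.trans h10)
  rw [← self_mod_pow_eq_ofDigits_take _ _ (by norm_num)]
  exact two_pow_le_mod_ten_pow he0 (pow_dvd_pow 2 hen)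
    (fun h => by simpa using prime_five.dvd_of_dvd_pow h)

end Nat

theorem stmt10_general (n m : ℕ)
    (hm : ((Nat.digits 10 (2 ^ n)).filter (· ≠ 0)).length = m) :
    2 ^ n < 10 ^ (4 ^ (m - 1)) := by
  have h := Nat.ofDigits_lt_ten_pow_four_pow (fun _ => Nat.digits_lt_base (by norm_num))
    fun _ => Nat.two_pow_le_ofDigits_take_digits_two_pow (n := n)
  rwa [Nat.ofDigits_digits, hm] at h

theorem stmt10 (n m : ℕ) (hn : 0 < n)
    (hm : ((Nat.digits 10 (2 ^ n)).filter (· ≠ 0)).length = m) :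
    2 ^ n < 10 ^ (4 ^ (m - 1)) :=
  stmt10_general n m hm
end

section
/- For every positive integer n, the number of nonzero decimal digits of 2^n is strictly greater than log₄ n. -/
/-!
If `M` has `k` nonzero decimal digits, its last digit is nonzero and `2^v ∣ M`, then `v < 4^k`.
Strip the leading digit: `M = M₀ + 10^a e` with `M₀ < 10^a`, so `M₀` has `k - 1` nonzero digits,
the same (nonzero) last digit, and `2^min(v, a) ∣ M₀`. By induction `min(v, a) < 4^(k-1)`, while
`2^v ≤ M < 10^(a+1) < 16^(a+1)` gives `v < 4(a+1)`; together `v < 4^k`. Apply this to `M = 2^n`.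
Only `2 ∣ 10 ≤ 2^4` matters, so the argument runs in any base `b` with `p ∣ b ≤ p^c`.
-/

open Nat

def nonzeroDigitCount (b n : ℕ) : ℕ := ((digits b n).filter (· ≠ 0)).length

lemma nonzeroDigitCount_eq_mod_pow_log_add_one {b M : ℕ} (hb : 1 < b) (hM : M ≠ 0) :
    nonzeroDigitCount b M = nonzeroDigitCount b (M % b ^ log b M) + 1 := by
  set a := log b M
  set M₀ := M % b ^ a
  set e := M / b ^ a
  have hpow_le : b ^ a ≤ M := pow_log_le_self b hM
  have he_pos : 0 < e := Nat.div_pos hpow_le (by positivity)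
  have he_lt : e < b := (Nat.div_lt_iff_lt_mul (by positivity)).mpr <| by
    simpa [_root_.pow_succ'] using lt_pow_succ_log_self hb M
  have hlen : (digits b M₀).length ≤ a :=
    (digits_length_le_iff hb M₀).mpr (Nat.mod_lt _ (by positivity))
  have hdigits :
      digits b M = digits b M₀ ++ List.replicate (a - (digits b M₀).length) 0 ++ [e] := by
    rw [← digits_of_lt b e he_pos.ne' he_lt, digits_append_zeroes_append_digits hb he_pos,
      Nat.add_sub_cancel' hlen, Nat.mod_add_div]
  simp [nonzeroDigitCount, hdigits, he_pos.ne']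

lemma lt_mul_log_add_one {b p c M v : ℕ} (hb : 1 < b) (hp : 1 < p) (hbc : b ≤ p ^ c)
    (hM : M ≠ 0) (hv : p ^ v ∣ M) : v < c * (log b M + 1) := by
  refine (Nat.pow_lt_pow_iff_right hp).mp ?_
  calc p ^ v ≤ M := Nat.le_of_dvd (Nat.pos_of_ne_zero hM) hv
    _ < b ^ (log b M + 1) := lt_pow_succ_log_self hb M
    _ ≤ (p ^ c) ^ (log b M + 1) := Nat.pow_le_pow_left hbc _
    _ = p ^ (c * (log b M + 1)) := (pow_mul p c _).symm

theorem lt_pow_nonzeroDigitCount {b p c M v : ℕ} (hb : 1 < b) (hpb : p ∣ b) (hbc : b ≤ p ^ c)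
    (hMb : M % b ≠ 0) (hv : p ^ v ∣ M) : v < c ^ nonzeroDigitCount b M := by
  have hp : 1 < p := by
    have hp0 : p ≠ 0 := by
      rintro rfl
      simp at hpb
      omega
    have hp1 : p ≠ 1 := by
      rintro rfl
      simp at hbc
      omega
    omega
  induction M using Nat.strong_induction_on generalizing v with
  | _ M ih =>
  have hM : M ≠ 0 := by
    rintro rfl
    simp at hMb
  have hv_lt := lt_mul_log_add_one hb hp hbc hM hv
  rw [nonzeroDigitCount_eq_mod_pow_log_add_one hb hM, _root_.pow_succ']
  set a := log b M
  rcases Nat.eq_zero_or_pos a with ha | ha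
  · simpa [ha, nonzeroDigitCount, Nat.mod_one] using hv_lt
  have hM₀b : M % b ^ a % b ≠ 0 := by rwa [Nat.mod_mod_of_dvd _ (dvd_pow_self b ha.ne')]
  have hM₀v : p ^ min v a ∣ M % b ^ a :=
    (Nat.dvd_mod_iff ((pow_dvd_pow p (min_le_right v a)).trans (pow_dvd_pow_of_dvd hpb a))).mpr
      ((pow_dvd_pow p (min_le_left v a)).trans hv)
  have hM₀_lt : M % b ^ a < M := (Nat.mod_lt _ (by positivity)).trans_le (pow_log_le_self b hM)
  have ih_M₀ := ih _ hM₀_lt hM₀b hM₀v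
  calc v < c * (min v a + 1) := by
        rcases le_total v a with hva | hav
        · have hc : 0 < c := Nat.pos_of_mul_pos_right (Nat.zero_lt_of_lt hv_lt)
          rw [min_eq_left hva]
          nlinarith
        · rwa [min_eq_right hav]
    _ ≤ c * c ^ nonzeroDigitCount b (M % b ^ a) := Nat.mul_le_mul_left c ih_M₀

theorem stmt11 (n : ℕ) (hn : 0 < n) :
    Real.logb 4 n < (((Nat.digits 10 (2 ^ n)).filter (· ≠ 0)).length : ℝ) := by
  have h_last : 2 ^ n % 10 ≠ 0 := by
    intro h
    have h5 : 5 ∣ 2 ^ n := (by norm_num : 5 ∣ 10).trans (Nat.dvd_of_mod_eq_zero h)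
    exact absurd (Nat.prime_five.dvd_of_dvd_pow h5) (by norm_num)
  have hlt : n < 4 ^ nonzeroDigitCount 10 (2 ^ n) :=
    lt_pow_nonzeroDigitCount (by norm_num) (by norm_num) (by norm_num) h_last dvd_rfl
  rw [Real.logb_lt_iff_lt_rpow (by norm_num) (by exact_mod_cast hn), Real.rpow_natCast]
  exact_mod_cast hlt
end

section
/- For every positive integer n, the decimal digit sum of 2^n is strictly greater than log₄ n, i.e., s(2^n) > (log n)/(log 4). -/
/-! Let `r_k = 2^n mod 10^k` for `k ≤ n` and let `s_k` be its digit sum. Since `r_k` is a nonzero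
multiple of `2^k`, we have `2^k ≤ r_k`. Induction on `k` gives `r_k^4 < 10^(4^s_k)`: a zero digit
changes neither side, while a nonzero digit at position `k` raises the digit sum by at least one,
and `2^(4k) ≤ r_k^4 < 10^(4^s_k) < 2^(4·4^s_k)` gives `k < 4^s_k`, hence
`r_(k+1)^4 < 10^(4(k+1)) ≤ 10^(4^(s_k+1))`. At `k = n` the same comparison yields `n < 4^s(2^n)`. -/

namespace Nat

theorem digits_sum_add_base_pow_mul {b k a m : ℕ} (hb : 1 < b) (ha : a < b ^ k) :
    (b.digits (a + b ^ k * m)).sum = (b.digits a).sum + (b.digits m).sum := by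
  rcases m.eq_zero_or_pos with rfl | hm
  · simp
  have hlen : (b.digits a).length ≤ k := (digits_length_le_iff hb a).2 ha
  rw [← Nat.add_sub_cancel' hlen, ← digits_append_zeroes_append_digits hb hm]
  simp

theorem digits_sum_of_lt {b d : ℕ} (hd : d < b) : (b.digits d).sum = d := by
  rcases d.eq_zero_or_pos with rfl | hd0
  · simp
  · simp [digits_of_lt b d hd0.ne' hd]

theorem digits_sum_mod_pow_succ {b : ℕ} (hb : 1 < b) (N k : ℕ) :
    (b.digits (N % b ^ (k + 1))).sum = (b.digits (N % b ^ k)).sum + N / b ^ k % b := by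
  rw [Nat.mod_pow_succ, digits_sum_add_base_pow_mul hb (Nat.mod_lt _ (by positivity)),
    digits_sum_of_lt (Nat.mod_lt _ (by omega))]

end Nat

open Nat

theorem two_pow_le_two_pow_mod_ten_pow {n k : ℕ} (hk : 0 < k) (hkn : k ≤ n) :
    2 ^ k ≤ 2 ^ n % 10 ^ k := by
  have hdvd : 2 ^ k ∣ 2 ^ n % 10 ^ k :=
    (Nat.dvd_mod_iff (pow_dvd_pow_of_dvd (by norm_num) k)).2 (pow_dvd_pow 2 hkn)
  have hne : 2 ^ n % 10 ^ k ≠ 0 := by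
    intro h
    have h5 : 5 ∣ 2 ^ n :=
      (dvd_pow (by norm_num : 5 ∣ 10) hk.ne').trans (Nat.dvd_of_mod_eq_zero h)
    have := Nat.prime_five.dvd_of_dvd_pow h5
    norm_num at this
  exact Nat.le_of_dvd (Nat.pos_of_ne_zero hne) hdvd

theorem lt_of_two_pow_le_of_pow_four_lt {k r m : ℕ} (hr : 2 ^ k ≤ r) (hm : r ^ 4 < 10 ^ m) :
    k < m := by
  have h : 2 ^ (4 * k) < 2 ^ (4 * m) :=
    calc 2 ^ (4 * k) = (2 ^ k) ^ 4 := by rw [← pow_mul, mul_comm]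
      _ ≤ r ^ 4 := Nat.pow_le_pow_left hr 4
      _ < 10 ^ m := hm
      _ ≤ 16 ^ m := Nat.pow_le_pow_left (by norm_num) m
      _ = 2 ^ (4 * m) := by rw [pow_mul]; norm_num
  have := (Nat.pow_lt_pow_iff_right (by norm_num)).1 h
  omega

theorem mod_ten_pow_pow_four_lt {N K : ℕ} (hN : ∀ k, 0 < k → k ≤ K → 2 ^ k ≤ N % 10 ^ k) :
    (N % 10 ^ K) ^ 4 < 10 ^ 4 ^ (digits 10 (N % 10 ^ K)).sum := by
  induction K with
  | zero => simp [Nat.mod_one]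
  | succ K ih =>
    have ih := ih fun k hk hkK => hN k hk (by omega)
    set s := (digits 10 (N % 10 ^ K)).sum
    have hK : K < 4 ^ s := by
      rcases K.eq_zero_or_pos with rfl | hK
      · exact Nat.pow_pos (by norm_num)
      · exact lt_of_two_pow_le_of_pow_four_lt (hN K hK K.le_succ) ih
    rw [digits_sum_mod_pow_succ (by norm_num)]
    rcases (N / 10 ^ K % 10).eq_zero_or_pos with hd | hd
    · rw [Nat.mod_pow_succ, hd]
      simpa using ih
    · calc (N % 10 ^ (K + 1)) ^ 4 < (10 ^ (K + 1)) ^ 4 :=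
            Nat.pow_lt_pow_left (Nat.mod_lt _ (by positivity)) (by norm_num)
        _ = 10 ^ (4 * (K + 1)) := by rw [← pow_mul, mul_comm]
        _ ≤ 10 ^ 4 ^ (s + N / 10 ^ K % 10) := by
          refine Nat.pow_le_pow_right (by norm_num) ?_
          calc 4 * (K + 1) ≤ 4 * 4 ^ s := by omega
            _ = 4 ^ (s + 1) := by rw [pow_succ, mul_comm]
            _ ≤ 4 ^ (s + N / 10 ^ K % 10) := Nat.pow_le_pow_right (by norm_num) (by omega)

theorem lt_four_pow_digits_sum_mod_ten_pow {N K : ℕ}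
    (hN : ∀ k, 0 < k → k ≤ K → 2 ^ k ≤ N % 10 ^ k) : K < 4 ^ (digits 10 (N % 10 ^ K)).sum := by
  rcases K.eq_zero_or_pos with rfl | hK
  · simp
  · exact lt_of_two_pow_le_of_pow_four_lt (hN K hK le_rfl) (mod_ten_pow_pow_four_lt hN)

theorem lt_four_pow_digits_sum_two_pow (n : ℕ) : n < 4 ^ (digits 10 (2 ^ n)).sum := by
  rcases n.eq_zero_or_pos with rfl | hn
  · simp
  have h := lt_four_pow_digits_sum_mod_ten_pow (N := 2 ^ n) (K := n)
    fun _ hk hkn => two_pow_le_two_pow_mod_ten_pow hk hkn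
  rwa [Nat.mod_eq_of_lt (Nat.pow_lt_pow_left (by norm_num) hn.ne')] at h

theorem stmt12 (n : ℕ) (hn : 0 < n) :
    Real.logb 4 n < ((Nat.digits 10 (2 ^ n)).sum : ℝ) := by
  rw [Real.logb_lt_iff_lt_rpow (by norm_num) (by exact_mod_cast hn), Real.rpow_natCast]
  exact_mod_cast lt_four_pow_digits_sum_two_pow n
end

section
/- The decimal digit sum of 2^n tends to infinity as n → ∞; that is, for every M there exists N such that for all n ≥ N, s(2^n) > M. -/
lemma len_le_of_lt_pow {a k : ℕ} (h : a < 10 ^ k) : (Nat.digits 10 a).length ≤ k := by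
  rcases eq_or_ne a 0 with rfl | ha
  · simp
  · rw [Nat.digits_len 10 a (by norm_num) ha]
    have := Nat.log_lt_of_lt_pow ha h
    omega

lemma sum_split {a b k : ℕ} (ha : a < 10 ^ k) :
    (Nat.digits 10 (a + b * 10 ^ k)).sum
      = (Nat.digits 10 a).sum + (Nat.digits 10 b).sum := by
  rcases eq_or_ne b 0 with rfl | hb
  · simp
  · have hlen : (Nat.digits 10 a).length ≤ k := len_le_of_lt_pow ha
    have key := Nat.digits_append_zeroes_append_digits
      (b := 10) (k := k - (Nat.digits 10 a).length) (m := b) (n := a)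
      (by norm_num) (Nat.pos_of_ne_zero hb)
    have hk : (Nat.digits 10 a).length + (k - (Nat.digits 10 a).length) = k := by omega
    rw [hk] at key
    rw [mul_comm b (10 ^ k), ← key]
    simp [List.sum_append, List.sum_replicate]

lemma digit_sum_pos {m : ℕ} (hm : m ≠ 0) : 1 ≤ (Nat.digits 10 m).sum := by
  have hne : Nat.digits 10 m ≠ [] := Nat.digits_ne_nil_iff_ne_zero.mpr hm
  have hlast := Nat.getLast_digit_ne_zero (b := 10) hm
  have hmem : (Nat.digits 10 m).getLast hne ∈ Nat.digits 10 m := List.getLast_mem hne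
  have := List.single_le_sum (l := Nat.digits 10 m) (fun x _ => Nat.zero_le x) _ hmem
  omega

lemma mod_large {n k : ℕ} (hk : 1 ≤ k) (hn : k ≤ n) : 2 ^ k ≤ 2 ^ n % 10 ^ k := by
  have hdvd : 2 ^ k ∣ 2 ^ n % 10 ^ k := by
    rw [Nat.mod_def]
    exact Nat.dvd_sub (pow_dvd_pow 2 hn)
      (((pow_dvd_pow_of_dvd (by norm_num : (2:ℕ) ∣ 10) k)).mul_right _)
  have hne : 2 ^ n % 10 ^ k ≠ 0 := by
    intro h
    have h10 : (10 : ℕ) ^ k ∣ 2 ^ n := Nat.dvd_of_mod_eq_zero h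
    have h5 : (5 : ℕ) ∣ 2 ^ n := dvd_trans (dvd_pow (by norm_num) (by omega))
      ((pow_dvd_pow_of_dvd (by norm_num : (5:ℕ) ∣ 10) k).trans h10)
    have h52 : (5 : ℕ) ∣ 2 := Nat.Prime.dvd_of_dvd_pow (by norm_num) h5
    omega
  exact Nat.le_of_dvd (Nat.pos_of_ne_zero hne) hdvd

lemma key_blocks : ∀ j n : ℕ, 4 ^ j ≤ n →
    j + 1 ≤ (Nat.digits 10 (2 ^ n % 10 ^ (4 ^ j))).sum := by
  intro j
  induction j with
  | zero =>
    intro n hn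
    simp only [pow_zero, pow_one]
    have h := mod_large (k := 1) le_rfl hn
    simp only [pow_one] at h
    have hlt : 2 ^ n % 10 < 10 := Nat.mod_lt _ (by norm_num)
    exact digit_sum_pos (by omega)
  | succ j ih =>
    intro n hn
    set k := 4 ^ j with hkdef
    have hk1 : 1 ≤ k := Nat.one_le_pow _ _ (by norm_num)
    have hkk : k ≤ 4 ^ (j+1) := Nat.pow_le_pow_right (by norm_num) (by omega)
    set r := 2 ^ n % 10 ^ (4 ^ (j + 1)) with hrdef
    have hr : 10 ^ k < r := by
      have h1 : 2 ^ (4 ^ (j+1)) ≤ r :=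
        mod_large (Nat.one_le_pow _ _ (by norm_num)) hn
      have h2 : (10:ℕ) ^ k < 2 ^ (4 ^ (j+1)) := by
        have h4 : (4:ℕ) ^ (j+1) = 4 * k := by rw [hkdef]; ring
        rw [h4, pow_mul]
        calc (10:ℕ) ^ k < 16 ^ k := Nat.pow_lt_pow_left (by norm_num) (by omega)
          _ = (2^4) ^ k := by norm_num
      omega
    have ha : r % 10 ^ k = 2 ^ n % 10 ^ k := by
      rw [hrdef, Nat.mod_mod_of_dvd _ (pow_dvd_pow 10 hkk)]
    have hsplit : r = r % 10 ^ k + (r / 10 ^ k) * 10 ^ k := by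
      rw [Nat.mod_add_div']
    have hb : r / 10 ^ k ≠ 0 := by
      have : 1 ≤ r / 10 ^ k := (Nat.one_le_div_iff (by positivity)).mpr (le_of_lt hr)
      omega
    have hsum : (Nat.digits 10 r).sum
        = (Nat.digits 10 (r % 10 ^ k)).sum + (Nat.digits 10 (r / 10 ^ k)).sum := by
      conv_lhs => rw [hsplit]
      exact sum_split (Nat.mod_lt _ (by positivity))
    have hbs := digit_sum_pos hb
    have hih := ih n (le_trans hkk hn)
    rw [← ha] at hih
    omega

theorem stmt13 : ∀ M : ℕ, ∃ N : ℕ, ∀ n, N ≤ n → M < (Nat.digits 10 (2 ^ n)).sum := by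
  intro M
  refine ⟨4 ^ M, fun n hn => ?_⟩
  have h := key_blocks M n hn
  have hsplit : 2 ^ n = 2 ^ n % 10 ^ (4 ^ M) + (2 ^ n / 10 ^ (4 ^ M)) * 10 ^ (4 ^ M) := by
    rw [Nat.mod_add_div']
  have hsum : (Nat.digits 10 (2 ^ n)).sum
      = (Nat.digits 10 (2 ^ n % 10 ^ (4 ^ M))).sum
        + (Nat.digits 10 (2 ^ n / 10 ^ (4 ^ M))).sum := by
    conv_lhs => rw [hsplit]
    exact sum_split (Nat.mod_lt _ (by positivity))
  omega
end

section
/- For every positive integer n, s(2^n) > (1/2) log₂ n / log₂ 4, equivalently 4^{s(2^n)} > n. -/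
/-!
Write `a = r + 10 ^ i * q` with `q` the leading digit. If `2 ^ k ∣ a` and `5 ∤ a`, then
`2 ^ min k i ∣ r` and (for `i ≠ 0`) `5 ∤ r`, so by induction `min k i < 4 ^ s(r)`. Moreover
`2 ^ k ≤ a < 10 ^ (i + 1) < 2 ^ (4 (i + 1))` gives `k < 4 (i + 1)`, and the leading digit adds at
least one to the digit sum, i.e. a factor `4`; either way `k < 4 ^ s(a)`. Take `a = 2 ^ n`, `k = n`.
-/

namespace Nat

theorem digits_sum_pos {b n : ℕ} (hn : n ≠ 0) : 0 < (digits b n).sum := by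
  rw [Nat.pos_iff_ne_zero, Ne, List.sum_eq_zero_iff]
  intro h
  exact getLast_digit_ne_zero b hn (h _ (List.getLast_mem _))

theorem digits_sum_add_base_pow_mul_s14 {b i r : ℕ} (hb : 1 < b) (hr : r < b ^ i) (q : ℕ) :
    (digits b (r + b ^ i * q)).sum = (digits b r).sum + (digits b q).sum := by
  rcases Nat.eq_zero_or_pos q with rfl | hq
  · simp
  have hlen : (digits b r).length ≤ i := (digits_length_le_iff hb r).mpr hr
  have := digits_append_zeroes_append_digits (k := i - (digits b r).length) (n := r) hb hq
  rw [Nat.add_sub_cancel' hlen] at this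
  simp [← this]

theorem lt_four_pow_digits_sum_of_two_pow_dvd {a k : ℕ} (h5 : ¬5 ∣ a) (hk : 2 ^ k ∣ a) :
    k < 4 ^ (digits 10 a).sum := by
  induction a using Nat.strong_induction_on generalizing k with
  | _ a ih =>
  have ha : a ≠ 0 := by rintro rfl; exact h5 (dvd_zero 5)
  set i := log 10 a
  set r := a % 10 ^ i
  set q := a / 10 ^ i
  have hsplit : a = r + 10 ^ i * q := (mod_add_div a (10 ^ i)).symm
  have hia : 10 ^ i ≤ a := pow_log_le_self 10 ha
  have hr : r < 10 ^ i := mod_lt a (by positivity)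
  have hq : q ≠ 0 := (Nat.div_pos hia (by positivity)).ne'
  have hsum : (digits 10 a).sum = (digits 10 r).sum + (digits 10 q).sum := by
    rw [hsplit, digits_sum_add_base_pow_mul_s14 (by norm_num) hr]
  have hmin : min k i < 4 ^ (digits 10 r).sum := by
    rcases eq_or_ne i 0 with hi | hi
    · simp [hi]
    have h5i : 5 ∣ 10 ^ i := dvd_pow (by norm_num) hi
    refine ih r (hr.trans_le hia) (fun h5r => h5 ?_) ?_
    · rw [hsplit]; exact dvd_add h5r (h5i.mul_right q)
    · have h2i : 2 ^ min k i ∣ 10 ^ i :=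
        (pow_dvd_pow 2 (min_le_right k i)).trans (pow_dvd_pow_of_dvd (by norm_num) i)
      exact (dvd_mod_iff h2i).mpr ((pow_dvd_pow 2 (min_le_left k i)).trans hk)
  have hk_lt : k < 4 * (i + 1) := by
    have : 2 ^ k < 2 ^ (4 * (i + 1)) := calc
      2 ^ k ≤ a := le_of_dvd (pos_of_ne_zero ha) hk
      _ < 10 ^ (i + 1) := lt_pow_succ_log_self (by norm_num) a
      _ ≤ 16 ^ (i + 1) := Nat.pow_le_pow_left (by norm_num) _
      _ = 2 ^ (4 * (i + 1)) := by rw [pow_mul]; norm_num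
    exact (Nat.pow_lt_pow_iff_right (by norm_num)).mp this
  have hlead : 4 * 4 ^ (digits 10 r).sum ≤ 4 ^ (digits 10 a).sum := by
    rw [hsum, pow_add, mul_comm]
    exact Nat.mul_le_mul_left _ (Nat.le_self_pow (digits_sum_pos hq).ne' 4)
  omega

end Nat

theorem stmt14_general (n : ℕ) : n < 4 ^ ((Nat.digits 10 (2 ^ n)).sum) :=
  Nat.lt_four_pow_digits_sum_of_two_pow_dvd
    (fun h => by simpa using Nat.prime_five.dvd_of_dvd_pow h) dvd_rfl

theorem stmt14 (n : ℕ) (hn : 0 < n) : n < 4 ^ ((Nat.digits 10 (2 ^ n)).sum) :=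
  stmt14_general n
end
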